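/- arXiv:math/0612617 — 3 statements merged into one kernel-verified Lean document; each statement's English description precedes it below -/
import Mathlib

section
/- Let (X,d) be a geodesic proper metric space with basepoint o that is K-quasi-starlike (every point lies within distance K of some geodesic ray from o), and let ε>0. Let δ_ε(x) denote the d_ε-distance from x∈X to the boundary ∂X_ε. Then (1/ε)e^{-ε·d(o,x)} ≤ δ_ε(x) ≤ C·(1/ε)e^{-ε·d(o,x)} for a constant C depending only on K and ε. -/
open Set Filter MeasureTheory Topology

lemma my_integral_exp_neg_mul {b : ℝ} (hb : 0 < b) :
    ∫ x in Ioi (0:ℝ), Real.exp (-b * x) = 1 / b := by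
  have h := integral_Ioi_of_hasDerivAt_of_tendsto
    (f := fun x => -Real.exp (-b * x) / b) (f' := fun x => Real.exp (-b * x)) (a := 0)
    (m := 0) ?_ ?_ (exp_neg_integrableOn_Ioi 0 hb) ?_
  · rw [h]; simp [div_eq_mul_inv]
  · exact (Continuous.continuousWithinAt (by continuity))
  · intro x _
    simpa [hb.ne'] using (((hasDerivAt_id x).const_mul (-b)).exp.neg.div_const b)
  · have : Tendsto (fun x : ℝ => -Real.exp (-b * x) / b) atTop (𝓝 (-0 / b)) := by
      refine Tendsto.div_const (Tendsto.neg ?_) _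
      exact Real.tendsto_exp_atBot.comp (tendsto_id.const_mul_atTop_of_neg (by linarith))
    simpa using this

lemma my_integral_exp_shift {ε : ℝ} (hε : 0 < ε) (a : ℝ) :
    ∫ s in Ioi (0:ℝ), Real.exp (-ε * (a + s)) = (1/ε) * Real.exp (-ε * a) := by
  have h : ∀ s : ℝ, Real.exp (-ε * (a + s)) = Real.exp (-ε * a) * Real.exp (-ε * s) := by
    intro s; rw [← Real.exp_add]; ring_nf
  simp_rw [h]
  rw [MeasureTheory.integral_const_mul, my_integral_exp_neg_mul hε]
  ring

lemma my_integrable_shift {ε : ℝ} (hε : 0 < ε) (a : ℝ) :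
    IntegrableOn (fun s => Real.exp (-ε * (a + s))) (Ioi (0:ℝ)) := by
  have h : (fun s => Real.exp (-ε * (a + s))) =
      fun s => Real.exp (-ε * a) * Real.exp (-ε * s) := by
    funext s; rw [← Real.exp_add]; ring_nf
  rw [h]
  exact (exp_neg_integrableOn_Ioi 0 hε).const_mul _

variable {X : Type*} [MetricSpace X]

noncomputable def distToBoundary (ε : ℝ) (o x : X) : ℝ :=
  sInf {ℓ : ℝ | ∃ γ : ℝ → X, γ 0 = x ∧
    (∀ s t : ℝ, 0 ≤ s → 0 ≤ t → dist (γ s) (γ t) ≤ |s - t|) ∧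
    Tendsto (fun t => dist o (γ t)) atTop atTop ∧
    MeasureTheory.IntegrableOn (fun t => Real.exp (-ε * dist o (γ t))) (Ioi (0:ℝ)) ∧
    ℓ = ∫ t in Ioi (0:ℝ), Real.exp (-ε * dist o (γ t))}

/-- In a geodesic proper `K`-quasi-starlike space, the distance to the boundary satisfies
`(1/ε) e^{-ε|x|} ≤ δ_ε(x) ≤ C (1/ε) e^{-ε|x|}` with `C = C(K,ε)`. -/
theorem stmt5 [ProperSpace X] (ε : ℝ) (hε : 0 < ε) (o : X) (K : ℝ) (hK : 0 ≤ K)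
    (hgeo : ∀ x y : X, ∃ γ : ℝ → X, γ 0 = x ∧ γ (dist x y) = y ∧
      ∀ s ∈ Icc (0:ℝ) (dist x y), ∀ t ∈ Icc (0:ℝ) (dist x y), dist (γ s) (γ t) = |s - t|)
    (hstar : ∀ x : X, ∃ γ : ℝ → X, γ 0 = o ∧
      (∀ s t : ℝ, 0 ≤ s → 0 ≤ t → dist (γ s) (γ t) = |s - t|) ∧
      ∃ t : ℝ, 0 ≤ t ∧ dist x (γ t) ≤ K) :
    ∃ C : ℝ, 0 < C ∧ ∀ x : X,
      (1/ε) * Real.exp (-ε * dist o x) ≤ distToBoundary ε o x ∧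
      distToBoundary ε o x ≤ C * ((1/ε) * Real.exp (-ε * dist o x)) := by
  refine ⟨Real.exp (2*ε*K), Real.exp_pos _, fun x => ?_⟩
  obtain ⟨γ, hγ0, hiso, t, ht0, hxt⟩ := hstar x
  obtain ⟨g, hg0, hgL, hgiso⟩ := hgeo x (γ t)
  set L := dist x (γ t) with hLdef
  have hL0 : 0 ≤ L := dist_nonneg
  have hLK : L ≤ K := hxt
  have hdoy : dist o (γ t) = t := by
    rw [← hγ0, hiso 0 t le_rfl ht0, abs_of_nonpos (by linarith)]; ring
  have htd : dist o x - K ≤ t := by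
    have h1 : dist o x ≤ dist o (γ t) + dist (γ t) x := dist_triangle _ _ _
    rw [hdoy, dist_comm (γ t) x] at h1
    linarith
  set σ : ℝ → X := fun s => if s < L then g (max s 0) else γ (t + s - L) with hσdef
  have hσlt : ∀ s : ℝ, 0 ≤ s → s < L → σ s = g s := by
    intro s hs hsL
    simp only [hσdef, if_pos hsL, max_eq_left hs]
  have hσgeL : ∀ s : ℝ, L ≤ s → σ s = γ (t + s - L) := by
    intro s hsL
    simp only [hσdef, if_neg (not_lt.mpr hsL)]
  have hσ0 : σ 0 = x := by
    rcases lt_or_eq_of_le hL0 with h | h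
    · rw [hσlt 0 le_rfl h, hg0]
    · rw [hσgeL 0 h.ge]
      have hxy : x = γ t := dist_eq_zero.mp h.symm
      rw [hxy]
      congr 1; linarith
  -- Lipschitz on nonneg reals (ordered version first)
  have hlip2 : ∀ s u : ℝ, 0 ≤ s → s ≤ u → dist (σ s) (σ u) ≤ u - s := by
    intro s u hs hsu
    by_cases hsL : s < L
    · by_cases huL : u < L
      · rw [hσlt s hs hsL, hσlt u (hs.trans hsu) huL]
        rw [hgiso s ⟨hs, hsL.le⟩ u ⟨hs.trans hsu, huL.le⟩, abs_of_nonpos (by linarith)]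
        linarith
      · push_neg at huL
        rw [hσlt s hs hsL, hσgeL u huL]
        have h1 : dist (g s) (γ (t + u - L)) ≤ dist (g s) (g L) + dist (g L) (γ (t + u - L)) :=
          dist_triangle _ _ _
        have h2 : dist (g s) (g L) = L - s := by
          rw [hgiso s ⟨hs, hsL.le⟩ L ⟨hL0, le_rfl⟩, abs_of_nonpos (by linarith)]; ring
        have h3 : dist (g L) (γ (t + u - L)) = u - L := by
          rw [hgL, hiso t (t + u - L) ht0 (by linarith), abs_of_nonpos (by linarith)]; ring
        rw [h2, h3] at h1; linarith
    · push_neg at hsL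
      rw [hσgeL s hsL, hσgeL u (hsL.trans hsu)]
      rw [hiso (t + s - L) (t + u - L) (by linarith) (by linarith),
        abs_of_nonpos (by linarith)]
      linarith
  have hσlip : ∀ s u : ℝ, 0 ≤ s → 0 ≤ u → dist (σ s) (σ u) ≤ |s - u| := by
    intro s u hs hu
    rcases le_total s u with h | h
    · rw [abs_of_nonpos (by linarith)]
      have := hlip2 s u hs h; linarith
    · rw [abs_of_nonneg (by linarith), dist_comm]
      have := hlip2 u s hu h; linarith
  -- lower bound on distance from o along σ
  have hσge : ∀ s : ℝ, 0 ≤ s → t + s - L ≤ dist o (σ s) := by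
    intro s hs
    by_cases hsL : s < L
    · rw [hσlt s hs hsL]
      have h1 : dist o (γ t) ≤ dist o (g s) + dist (g s) (γ t) := dist_triangle _ _ _
      have h2 : dist (g s) (γ t) = L - s := by
        rw [← hgL, hgiso s ⟨hs, hsL.le⟩ L ⟨hL0, le_rfl⟩, abs_of_nonpos (by linarith)]; ring
      rw [hdoy, h2] at h1; linarith
    · push_neg at hsL
      rw [hσgeL s hsL, ← hγ0, hiso 0 (t + s - L) le_rfl (by linarith),
        abs_of_nonpos (by linarith)]
      linarith
  -- tendsto
  have htend : Tendsto (fun s => dist o (σ s)) atTop atTop := by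
    refine tendsto_atTop_mono' atTop ?_ (tendsto_atTop_add_const_right atTop (t - L) tendsto_id)
    filter_upwards [eventually_ge_atTop (0:ℝ)] with s hs
    simp only [id_eq]
    have := hσge s hs
    linarith
  -- continuity / measurability
  have hdlip : LipschitzOnWith 1 (fun s => dist o (σ s)) (Ici (0:ℝ)) := by
    refine LipschitzOnWith.of_dist_le_mul fun s hs u hu => ?_
    rw [Real.dist_eq, Real.dist_eq, NNReal.coe_one, one_mul]
    have h := (abs_dist_sub_le (σ s) (σ u) o).trans (hσlip s u hs hu)
    rw [dist_comm (σ s) o, dist_comm (σ u) o] at h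
    exact h
  have hcont : ContinuousOn (fun s => Real.exp (-ε * dist o (σ s))) (Ici (0:ℝ)) :=
    Real.continuous_exp.comp_continuousOn (continuousOn_const.mul hdlip.continuousOn)
  have hmeas : AEStronglyMeasurable (fun s => Real.exp (-ε * dist o (σ s)))
      (MeasureTheory.volume.restrict (Ioi (0:ℝ))) :=
    (hcont.mono Ioi_subset_Ici_self).aestronglyMeasurable measurableSet_Ioi
  -- pointwise bound
  have hbound : ∀ s ∈ Ioi (0:ℝ),
      Real.exp (-ε * dist o (σ s)) ≤ Real.exp (-ε * ((t - L) + s)) := by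
    intro s hs
    apply Real.exp_le_exp.mpr
    have h1 := hσge s (le_of_lt hs)
    exact mul_le_mul_of_nonpos_left (by linarith) (by linarith : -ε ≤ 0)
  -- integrability of the σ-integrand
  have hintσ : IntegrableOn (fun s => Real.exp (-ε * dist o (σ s))) (Ioi (0:ℝ)) := by
    refine (my_integrable_shift hε (t - L)).mono' hmeas ?_
    refine (ae_restrict_iff' measurableSet_Ioi).mpr (Filter.Eventually.of_forall fun s hs => ?_)
    rw [Real.norm_eq_abs, abs_of_pos (Real.exp_pos _)]
    exact hbound s hs
  -- membership
  set S := {ℓ : ℝ | ∃ γ : ℝ → X, γ 0 = x ∧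
    (∀ s t : ℝ, 0 ≤ s → 0 ≤ t → dist (γ s) (γ t) ≤ |s - t|) ∧
    Tendsto (fun t => dist o (γ t)) atTop atTop ∧
    MeasureTheory.IntegrableOn (fun t => Real.exp (-ε * dist o (γ t))) (Ioi (0:ℝ)) ∧
    ℓ = ∫ t in Ioi (0:ℝ), Real.exp (-ε * dist o (γ t))} with hSdef
  have hmem : (∫ s in Ioi (0:ℝ), Real.exp (-ε * dist o (σ s))) ∈ S :=
    ⟨σ, hσ0, hσlip, htend, hintσ, rfl⟩
  have hbdd : BddBelow S := by
    refine ⟨0, fun ℓ hℓ => ?_⟩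
    obtain ⟨γ', -, -, -, -, rfl⟩ := hℓ
    exact integral_nonneg fun s => (Real.exp_pos _).le
  constructor
  · -- lower bound
    refine le_csInf ⟨_, hmem⟩ fun ℓ hℓ => ?_
    obtain ⟨γ', h0, hlip, -, hint', rfl⟩ := hℓ
    have hlow : ∀ s ∈ Ioi (0:ℝ),
        Real.exp (-ε * (dist o x + s)) ≤ Real.exp (-ε * dist o (γ' s)) := by
      intro s hs
      apply Real.exp_le_exp.mpr
      have h1 : dist o (γ' s) ≤ dist o (γ' 0) + dist (γ' 0) (γ' s) := dist_triangle _ _ _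
      have h2 : dist (γ' 0) (γ' s) ≤ |0 - s| := hlip 0 s le_rfl (le_of_lt hs)
      rw [abs_of_nonpos (by simp only [mem_Ioi] at hs; linarith : (0:ℝ) - s ≤ 0)] at h2
      rw [h0] at h1 h2
      exact mul_le_mul_of_nonpos_left (by linarith) (by linarith : -ε ≤ 0)
    calc (1/ε) * Real.exp (-ε * dist o x)
        = ∫ s in Ioi (0:ℝ), Real.exp (-ε * (dist o x + s)) :=
          (my_integral_exp_shift hε _).symm
      _ ≤ ∫ s in Ioi (0:ℝ), Real.exp (-ε * dist o (γ' s)) :=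
          setIntegral_mono_on (my_integrable_shift hε _) hint' measurableSet_Ioi hlow
  · -- upper bound
    have h1 : distToBoundary ε o x ≤ ∫ s in Ioi (0:ℝ), Real.exp (-ε * dist o (σ s)) :=
      csInf_le hbdd hmem
    have h2 : (∫ s in Ioi (0:ℝ), Real.exp (-ε * dist o (σ s)))
        ≤ (1/ε) * Real.exp (-ε * (t - L)) := by
      calc (∫ s in Ioi (0:ℝ), Real.exp (-ε * dist o (σ s)))
          ≤ ∫ s in Ioi (0:ℝ), Real.exp (-ε * ((t - L) + s)) :=
            setIntegral_mono_on hintσ (my_integrable_shift hε _) measurableSet_Ioi hbound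
        _ = (1/ε) * Real.exp (-ε * (t - L)) := my_integral_exp_shift hε _
    have h3 : (1/ε) * Real.exp (-ε * (t - L))
        ≤ Real.exp (2*ε*K) * ((1/ε) * Real.exp (-ε * dist o x)) := by
      have he : Real.exp (-ε * (t - L)) ≤ Real.exp (2*ε*K + -ε * dist o x) := by
        apply Real.exp_le_exp.mpr; nlinarith
      rw [Real.exp_add] at he
      calc (1/ε) * Real.exp (-ε * (t - L))
          ≤ (1/ε) * (Real.exp (2*ε*K) * Real.exp (-ε * dist o x)) := by
            apply mul_le_mul_of_nonneg_left he (by positivity)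
        _ = Real.exp (2*ε*K) * ((1/ε) * Real.exp (-ε * dist o x)) := by ring
    exact h1.trans (h2.trans h3)
end

section
/- Let F and d_F be as in the transfer operator setting, and suppose every pair of preimage points of sufficiently close points ξ, ζ can be joined pairwise by curves of length at most ℓ·e^{-εn} after n pullbacks (contraction of inverse branches). If φ is continuous with modulus of continuity ω_φ, then |A^n φ(ξ) − A^n φ(ζ)| ≤ ω_φ(ℓ e^{-εn}) for ξ, ζ joined by a curve of ε-length ℓ. Consequently the family (A^n φ)_n is uniformly equicontinuous and every uniform limit of a subsequence is locally constant. -/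
open Filter Topology

/-!
Pairing the `dⁿ` preimages of `ξ` with those of `ζ` at distance at most `ℓ e^{-εn}` writes
`Aⁿφ(ξ) - Aⁿφ(ζ)` as an average of `dⁿ` differences `φ(aᵢ) - φ(bᵢ)`, each bounded by
`ω(ℓ e^{-εn})`. Since `e^{-εn} ≤ 1`, this bound is uniform in `n`, giving equicontinuity; since
`e^{-εn} → 0` and `ω` is continuous at `0`, the difference of any subsequential limit at two
points joined by a curve vanishes.
-/

/-- The `n`-th normalized transfer operator
`Aⁿ(φ)(ξ) = (1/dⁿ) Σ_{Fⁿ(ζ)=ξ} d_{Fⁿ}(ζ) φ(ζ)`, where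
`d_{Fⁿ}(ζ) = ∏_{i<n} d_F(Fⁱζ)`. -/
noncomputable def transferIter {Z : Type*} [MetricSpace Z] (F : Z → Z) (dF : Z → ℕ)
    (d : ℕ) (n : ℕ) (φ : Z → ℝ) (ξ : Z) : ℝ :=
  (1 / (d : ℝ) ^ n) * ∑' ζ : ((F^[n]) ⁻¹' {ξ} : Set Z),
    ((∏ i ∈ Finset.range n, dF (F^[i] (ζ : Z)) : ℕ) : ℝ) * φ (ζ : Z)

theorem abs_sum_sub_sum_le_card_mul_of_modulus {Z ι : Type*} [PseudoMetricSpace Z] [Fintype ι]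
    {φ : Z → ℝ} {ω : ℝ → ℝ}
    (hωmono : Monotone ω) (hωmod : ∀ a b : Z, |φ a - φ b| ≤ ω (dist a b))
    {a b : ι → Z} {t : ℝ} (hab : ∀ i, dist (a i) (b i) ≤ t) :
    |∑ i, φ (a i) - ∑ i, φ (b i)| ≤ Fintype.card ι * ω t := by
  rw [← Finset.sum_sub_distrib]
  calc |∑ i, (φ (a i) - φ (b i))| ≤ ∑ i, |φ (a i) - φ (b i)| := Finset.abs_sum_le_sum_abs _ _
    _ ≤ ∑ _i : ι, ω t := Finset.sum_le_sum fun i _ => (hωmod _ _).trans (hωmono (hab i))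
    _ = Fintype.card ι * ω t := by simp

theorem abs_transferIter_sub_le_of_matching {Z : Type*} [MetricSpace Z] {φ : Z → ℝ}
    {ω : ℝ → ℝ} {F : Z → Z} {dF : Z → ℕ} {d n : ℕ} {ξ ζ : Z}
    (hd : 1 ≤ d) (hωmono : Monotone ω) (hωmod : ∀ a b : Z, |φ a - φ b| ≤ ω (dist a b))
    {a b : Fin (d ^ n) → Z} {t : ℝ} (hab : ∀ i, dist (a i) (b i) ≤ t)
    (ha : ∑' η : ((F^[n]) ⁻¹' {ξ} : Set Z),
      ((∏ i ∈ Finset.range n, dF (F^[i] (η : Z)) : ℕ) : ℝ) * φ η = ∑ i, φ (a i))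
    (hb : ∑' η : ((F^[n]) ⁻¹' {ζ} : Set Z),
      ((∏ i ∈ Finset.range n, dF (F^[i] (η : Z)) : ℕ) : ℝ) * φ η = ∑ i, φ (b i)) :
    |transferIter F dF d n φ ξ - transferIter F dF d n φ ζ| ≤ ω t := by
  have hdn : (0 : ℝ) < (d : ℝ) ^ n := pow_pos (by exact_mod_cast hd) n
  rw [transferIter, transferIter, ha, hb, ← mul_sub, abs_mul, abs_of_pos (by positivity)]
  calc 1 / (d : ℝ) ^ n * |∑ i, φ (a i) - ∑ i, φ (b i)|
      ≤ 1 / (d : ℝ) ^ n * ((d : ℝ) ^ n * ω t) := by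
        gcongr
        simpa using abs_sum_sub_sum_le_card_mul_of_modulus hωmono hωmod hab
    _ = ω t := by field_simp

section JoinedBound

variable {Z ι : Type*} {J : Z → Z → ℝ → Prop} {ω : ℝ → ℝ}
  {f : ι → Z → ℝ} {c : ι → ℝ}

theorem exists_forall_abs_sub_le_of_joined_bound [PseudoMetricSpace Z] (hωmono : Monotone ω)
    (hω0 : ω 0 = 0) (hωcont : ContinuousAt ω 0) (hJnonneg : ∀ ξ ζ ℓ, J ξ ζ ℓ → 0 ≤ ℓ)
    (hJ : ∀ δ : ℝ, 0 < δ → ∃ r > 0, ∀ ξ ζ : Z, dist ξ ζ < r → ∃ ℓ ≤ δ, J ξ ζ ℓ)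
    (hc : ∀ i, c i ≤ 1) (hf : ∀ i ξ ζ ℓ, J ξ ζ ℓ → |f i ξ - f i ζ| ≤ ω (ℓ * c i))
    {δ : ℝ} (hδ : 0 < δ) :
    ∃ r > 0, ∀ i ξ ζ, dist ξ ζ < r → |f i ξ - f i ζ| ≤ δ := by
  have hsmall : ∀ᶠ t in 𝓝[>] 0, ω t < δ :=
    nhdsWithin_le_nhds ((hω0 ▸ hωcont.tendsto).eventually (gt_mem_nhds hδ))
  obtain ⟨t, hωt, ht⟩ := (hsmall.and self_mem_nhdsWithin).exists
  obtain ⟨r, hr, hjoin⟩ := hJ t ht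
  refine ⟨r, hr, fun i ξ ζ hξζ => ?_⟩
  obtain ⟨ℓ, hℓt, hJξζ⟩ := hjoin ξ ζ hξζ
  calc |f i ξ - f i ζ| ≤ ω (ℓ * c i) := hf i ξ ζ ℓ hJξζ
    _ ≤ ω t := hωmono ((mul_le_of_le_one_right (hJnonneg ξ ζ ℓ hJξζ) (hc i)).trans hℓt)
    _ ≤ δ := hωt.le

theorem eq_of_tendsto_of_joined_bound {l : Filter ι} [l.NeBot] (hω0 : ω 0 = 0)
    (hωcont : ContinuousAt ω 0) (hc : Tendsto c l (𝓝 0))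
    (hf : ∀ i ξ ζ ℓ, J ξ ζ ℓ → |f i ξ - f i ζ| ≤ ω (ℓ * c i))
    {ψ : Z → ℝ} (hψ : ∀ ξ, Tendsto (fun i => f i ξ) l (𝓝 (ψ ξ)))
    {ξ ζ : Z} {ℓ : ℝ} (hJξζ : J ξ ζ ℓ) : ψ ξ = ψ ζ := by
  have hbound : Tendsto (fun i => ω (ℓ * c i)) l (𝓝 0) := by
    have harg : Tendsto (fun i => ℓ * c i) l (𝓝 0) := by simpa using hc.const_mul ℓ
    simpa [hω0, Function.comp_def] using hωcont.tendsto.comp harg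
  have hle : |ψ ξ - ψ ζ| ≤ 0 :=
    le_of_tendsto_of_tendsto' ((hψ ξ).sub (hψ ζ)).abs hbound fun i => hf i ξ ζ ℓ hJξζ
  exact sub_eq_zero.mp (abs_nonpos_iff.mp hle)

end JoinedBound

theorem tendsto_exp_neg_mul_comp_atTop {ε : ℝ} (hε : 0 < ε) {σ : ℕ → ℕ}
    (hσ : Tendsto σ atTop atTop) :
    Tendsto (fun k => Real.exp (-ε * σ k)) atTop (𝓝 0) := by
  simpa only [neg_mul, Function.comp_def] using Real.tendsto_exp_neg_atTop_nhds_zero.comp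
    ((tendsto_natCast_atTop_atTop.comp hσ).const_mul_atTop hε)

/-- `J ξ ζ ℓ` means "`ξ` and `ζ` are joined by a curve of ε-length `ℓ`", and `hmatch`
expresses that preimages under `Fⁿ` are matched in pairs (with multiplicity, there
being `dⁿ` preimages counted with multiplicity) at distance at most `ℓ e^{-εn}`. -/
theorem stmt15_general {Z : Type*} [MetricSpace Z]
    (F : Z → Z) (dF : Z → ℕ) (d : ℕ) (hd : 1 ≤ d)
    (ε : ℝ) (hε : 0 < ε)
    (J : Z → Z → ℝ → Prop)
    (hJnonneg : ∀ ξ ζ ℓ, J ξ ζ ℓ → 0 ≤ ℓ)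
    (hJ : ∀ δ : ℝ, 0 < δ → ∃ r > 0, ∀ ξ ζ : Z, dist ξ ζ < r → ∃ ℓ ≤ δ, J ξ ζ ℓ)
    (φ : Z → ℝ)
    (ω : ℝ → ℝ) (hωmono : Monotone ω) (hω0 : ω 0 = 0) (hωcont : ContinuousAt ω 0)
    (hωmod : ∀ a b : Z, |φ a - φ b| ≤ ω (dist a b))
    (hmatch : ∀ (n : ℕ) (ξ ζ : Z) (ℓ : ℝ), J ξ ζ ℓ →
      ∃ (k : ℕ) (a b : Fin k → Z),
        k = d ^ n ∧
        (∀ i, F^[n] (a i) = ξ) ∧ (∀ i, F^[n] (b i) = ζ) ∧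
        (∀ i, dist (a i) (b i) ≤ ℓ * Real.exp (-ε * n)) ∧
        (∀ ψ : Z → ℝ,
          (∑' η : ((F^[n]) ⁻¹' {ξ} : Set Z),
            ((∏ i ∈ Finset.range n, dF (F^[i] (η : Z)) : ℕ) : ℝ) * ψ (η : Z))
              = ∑ i, ψ (a i)) ∧
        (∀ ψ : Z → ℝ,
          (∑' η : ((F^[n]) ⁻¹' {ζ} : Set Z),
            ((∏ i ∈ Finset.range n, dF (F^[i] (η : Z)) : ℕ) : ℝ) * ψ (η : Z))
              = ∑ i, ψ (b i))) :
    (∀ (n : ℕ) (ξ ζ : Z) (ℓ : ℝ), J ξ ζ ℓ →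
      |transferIter F dF d n φ ξ - transferIter F dF d n φ ζ| ≤ ω (ℓ * Real.exp (-ε * n))) ∧
    (∀ δ : ℝ, 0 < δ → ∃ r > 0, ∀ (n : ℕ) (ξ ζ : Z), dist ξ ζ < r →
      |transferIter F dF d n φ ξ - transferIter F dF d n φ ζ| ≤ δ) ∧
    (∀ (ψ : Z → ℝ) (σ : ℕ → ℕ), StrictMono σ →
      TendstoUniformly (fun k => transferIter F dF d (σ k) φ) ψ atTop →
      ∀ ξ : Z, ∃ U ∈ nhds ξ, ∀ ζ ∈ U, ψ ζ = ψ ξ) := by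
  have hbound : ∀ (n : ℕ) (ξ ζ : Z) (ℓ : ℝ), J ξ ζ ℓ →
      |transferIter F dF d n φ ξ - transferIter F dF d n φ ζ| ≤
        ω (ℓ * Real.exp (-ε * n)) := by
    intro n ξ ζ ℓ hJξζ
    obtain ⟨_, a, b, rfl, -, -, hab, ha, hb⟩ := hmatch n ξ ζ ℓ hJξζ
    exact abs_transferIter_sub_le_of_matching hd hωmono hωmod hab (ha φ) (hb φ)
  have hexp_le_one (n : ℕ) : Real.exp (-ε * n) ≤ 1 :=
    Real.exp_le_one_iff.mpr (by nlinarith [n.cast_nonneg (α := ℝ)])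
  refine ⟨hbound, fun δ hδ => exists_forall_abs_sub_le_of_joined_bound hωmono hω0 hωcont
    hJnonneg hJ hexp_le_one hbound hδ, fun ψ σ hσ hconv ξ => ?_⟩
  obtain ⟨r, hr, hjoin⟩ := hJ 1 one_pos
  refine ⟨Metric.ball ξ r, Metric.ball_mem_nhds ξ hr, fun ζ hζ => ?_⟩
  obtain ⟨ℓ, -, hJζξ⟩ := hjoin ζ ξ hζ
  exact eq_of_tendsto_of_joined_bound hω0 hωcont
    (tendsto_exp_neg_mul_comp_atTop hε hσ.tendsto_atTop) (fun k => hbound (σ k))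
    hconv.tendsto_at hJζξ

/-- Contraction of inverse branches implies uniform equicontinuity of the iterated
transfer operators and local constancy of subsequential uniform limits.  Here
`J ξ ζ ℓ` means "`ξ` and `ζ` are joined by a curve of ε-length `ℓ`", and `hmatch`
expresses that preimages under `Fⁿ` are matched in pairs (with multiplicity, there
being `dⁿ` preimages counted with multiplicity) at distance at most `ℓ e^{-εn}`. -/
theorem stmt15 {Z : Type*} [MetricSpace Z] [CompactSpace Z]
    (F : Z → Z) (hF : Continuous F) (dF : Z → ℕ) (d : ℕ) (hd : 1 ≤ d)
    (ε : ℝ) (hε : 0 < ε)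
    (J : Z → Z → ℝ → Prop)
    (hJnonneg : ∀ ξ ζ ℓ, J ξ ζ ℓ → 0 ≤ ℓ)
    (hJ : ∀ δ : ℝ, 0 < δ → ∃ r > 0, ∀ ξ ζ : Z, dist ξ ζ < r → ∃ ℓ ≤ δ, J ξ ζ ℓ)
    (φ : Z → ℝ) (hφ : Continuous φ)
    (ω : ℝ → ℝ) (hωmono : Monotone ω) (hω0 : ω 0 = 0) (hωcont : ContinuousAt ω 0)
    (hωmod : ∀ a b : Z, |φ a - φ b| ≤ ω (dist a b))
    (hmatch : ∀ (n : ℕ) (ξ ζ : Z) (ℓ : ℝ), J ξ ζ ℓ →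
      ∃ (k : ℕ) (a b : Fin k → Z),
        k = d ^ n ∧
        (∀ i, F^[n] (a i) = ξ) ∧ (∀ i, F^[n] (b i) = ζ) ∧
        (∀ i, dist (a i) (b i) ≤ ℓ * Real.exp (-ε * n)) ∧
        (∀ ψ : Z → ℝ,
          (∑' η : ((F^[n]) ⁻¹' {ξ} : Set Z),
            ((∏ i ∈ Finset.range n, dF (F^[i] (η : Z)) : ℕ) : ℝ) * ψ (η : Z))
              = ∑ i, ψ (a i)) ∧
        (∀ ψ : Z → ℝ,
          (∑' η : ((F^[n]) ⁻¹' {ζ} : Set Z),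
            ((∏ i ∈ Finset.range n, dF (F^[i] (η : Z)) : ℕ) : ℝ) * ψ (η : Z))
              = ∑ i, ψ (b i))) :
    (∀ (n : ℕ) (ξ ζ : Z) (ℓ : ℝ), J ξ ζ ℓ →
      |transferIter F dF d n φ ξ - transferIter F dF d n φ ζ| ≤ ω (ℓ * Real.exp (-ε * n))) ∧
    (∀ δ : ℝ, 0 < δ → ∃ r > 0, ∀ (n : ℕ) (ξ ζ : Z), dist ξ ζ < r →
      |transferIter F dF d n φ ξ - transferIter F dF d n φ ζ| ≤ δ) ∧
    (∀ (ψ : Z → ℝ) (σ : ℕ → ℕ), StrictMono σ →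
      TendstoUniformly (fun k => transferIter F dF d (σ k) φ) ψ atTop →
      ∀ ξ : Z, ∃ U ∈ nhds ξ, ∀ ζ ∈ U, ψ ζ = ψ ξ) :=
  stmt15_general F dF d hd ε hε J hJnonneg hJ φ ω hωmono hω0 hωcont hωmod hmatch
end

section
/- Let F: Z → Z be a continuous open map of a compact metric space such that for every ξ ∈ Z and every r < R₀ (for some fixed R₀ > 0), F restricted to B(ξ, r e^{-ε}) is a surjection onto B(F(ξ), r). Suppose n ≥ 1 and B = B(ξ, r) with F^n|_B : B → B(F^n(ξ), e^{nε}r) a homeomorphism such that curves in the image lift to curves in B with ε-lengths scaled by exactly e^{-nε}. Then for all ζ₁, ζ₂ ∈ B(ξ, r/4), d(F^n(ζ₁), F^n(ζ₂)) = e^{nε}·d(ζ₁, ζ₂); i.e., F^n is a similarity with ratio e^{nε} on the quarter-ball. -/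
open Set Metric

/-- If `Fⁿ` is injective on a ball `B = B(ξ,r)` and maps it homeomorphically onto
`B(Fⁿξ, e^{nε} r)`, in a length space where `F` maps balls `B(·, re^{-ε})` onto balls
`B(F·, r)` and curves in the image lift with ε-lengths scaled by exactly `e^{-nε}`, then
`Fⁿ` is a similarity with ratio `e^{nε}` on the quarter-ball `B(ξ, r/4)`:
`d(Fⁿζ₁, Fⁿζ₂) = e^{nε} d(ζ₁,ζ₂)`. -/
theorem stmt18 {Z : Type*} [MetricSpace Z] (F : Z → Z) (ε : ℝ) (hε : 0 < ε)
    (R₀ : ℝ) (hR₀ : 0 < R₀)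
    (hlip : LipschitzWith (Real.toNNReal (Real.exp ε)) F)
    (hball : ∀ (ξ : Z) (r : ℝ), 0 < r → r < R₀ →
      F '' (ball ξ (r * Real.exp (-ε))) = ball (F ξ) r)
    (hlength : ∀ x y : Z, ∀ δ : ℝ, 0 < δ → ∃ (γ : ℝ → Z) (L : ℝ), 0 ≤ L ∧
      γ 0 = x ∧ γ L = y ∧ LipschitzOnWith 1 γ (Icc 0 L) ∧ L ≤ dist x y + δ)
    (n : ℕ) (ξ : Z) (r : ℝ) (hr : 0 < r)
    (hinj : Set.InjOn (F^[n]) (ball ξ r))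
    (himg : F^[n] '' (ball ξ r) = ball (F^[n] ξ) (Real.exp (n * ε) * r))
    (hlift : ∀ (γ : ℝ → Z) (L : ℝ) (ζ : Z), 0 ≤ L → ζ ∈ ball ξ r →
      (∀ t ∈ Icc (0:ℝ) L, γ t ∈ ball (F^[n] ξ) (Real.exp (n * ε) * r)) →
      LipschitzOnWith 1 γ (Icc 0 L) → γ 0 = F^[n] ζ →
      ∃ γ' : ℝ → Z, γ' 0 = ζ ∧
        (∀ t ∈ Icc (0:ℝ) L, γ' t ∈ ball ξ r ∧ F^[n] (γ' t) = γ t) ∧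
        LipschitzOnWith (Real.toNNReal (Real.exp (-ε * n))) γ' (Icc 0 L)) :
    ∀ ζ₁ ∈ ball ξ (r / 4), ∀ ζ₂ ∈ ball ξ (r / 4),
      dist (F^[n] ζ₁) (F^[n] ζ₂) = Real.exp (n * ε) * dist ζ₁ ζ₂ := by

  intro ζ₁ hζ₁ ζ₂ hζ₂
  have hen : (0:ℝ) < Real.exp (n * ε) := Real.exp_pos _
  have hζ₁' : ζ₁ ∈ ball ξ r := ball_subset_ball (by linarith) hζ₁
  have hζ₂' : ζ₂ ∈ ball ξ r := ball_subset_ball (by linarith) hζ₂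
  -- Upper bound from Lipschitz
  have hupper : ∀ x y : Z, dist (F^[n] x) (F^[n] y) ≤ Real.exp (n * ε) * dist x y := by
    intro x y
    have h := (hlip.iterate n).dist_le_mul x y
    have hc : ((Real.toNNReal (Real.exp ε)) ^ n : NNReal) = (Real.exp (n * ε)).toNNReal := by
      rw [← Real.toNNReal_pow (Real.exp_pos ε).le, ← Real.exp_nat_mul]
    rw [hc] at h
    rwa [Real.coe_toNNReal _ hen.le] at h
  set D := dist (F^[n] ζ₁) (F^[n] ζ₂) with hD
  have hDub : D ≤ Real.exp (n * ε) * dist ζ₁ ζ₂ := hupper ζ₁ ζ₂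
  -- Lower bound via lifting curves
  have hlower : dist ζ₁ ζ₂ ≤ Real.exp (-(n * ε)) * D := by
    apply le_of_forall_pos_le_add
    intro δ hδ
    set δ' : ℝ := min (δ * Real.exp (n * ε)) (Real.exp (n * ε) * r / 8) with hδ'def
    have hδ' : 0 < δ' := lt_min (by positivity) (by positivity)
    obtain ⟨γ, L, hL, hγ0, hγL, hγLip, hLle⟩ := hlength (F^[n] ζ₁) (F^[n] ζ₂) δ' hδ'
    have hDle : D ≤ Real.exp (n * ε) * (r / 2) := by
      have := hupper ζ₁ ζ₂
      have hd12 : dist ζ₁ ζ₂ ≤ r / 2 := by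
        have := dist_triangle_right ζ₁ ζ₂ ξ
        rw [mem_ball] at hζ₁ hζ₂
        linarith
      nlinarith
    have hmem : ∀ t ∈ Icc (0:ℝ) L, γ t ∈ ball (F^[n] ξ) (Real.exp (n * ε) * r) := by
      intro t ht
      rw [mem_ball]
      have h1 : dist (γ t) (γ 0) ≤ L := by
        have := hγLip.dist_le_mul t ht 0 ⟨le_refl 0, hL⟩
        simpa [Real.dist_eq, abs_of_nonneg ht.1] using this.trans (by
          simp [Real.dist_eq, abs_of_nonneg ht.1]; exact ht.2)
      have h2 : dist (F^[n] ζ₁) (F^[n] ξ) ≤ Real.exp (n * ε) * (r / 4) := by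
        have := hupper ζ₁ ξ
        rw [mem_ball] at hζ₁
        nlinarith
      have h3 : δ' ≤ Real.exp (n * ε) * r / 8 := min_le_right _ _
      calc dist (γ t) (F^[n] ξ) ≤ dist (γ t) (γ 0) + dist (γ 0) (F^[n] ξ) :=
            dist_triangle _ _ _
        _ ≤ L + Real.exp (n * ε) * (r / 4) := by rw [hγ0] at h1 ⊢; linarith
        _ ≤ (D + δ') + Real.exp (n * ε) * (r / 4) := by linarith
        _ < Real.exp (n * ε) * r := by nlinarith
    obtain ⟨γ', hγ'0, hγ'mem, hγ'Lip⟩ := hlift γ L ζ₁ hL hζ₁' hmem hγLip hγ0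
    have hLmem : L ∈ Icc (0:ℝ) L := ⟨hL, le_refl L⟩
    have hγ'L : γ' L = ζ₂ := by
      apply hinj (hγ'mem L hLmem).1 hζ₂'
      rw [(hγ'mem L hLmem).2, hγL]
    have hdd : dist ζ₁ ζ₂ ≤ Real.exp (-ε * n) * L := by
      have h := hγ'Lip.dist_le_mul 0 ⟨le_refl 0, hL⟩ L hLmem
      rw [hγ'0, hγ'L] at h
      have : dist (0:ℝ) L = L := by simp [Real.dist_eq, abs_of_nonneg hL]
      rw [this, Real.coe_toNNReal _ (Real.exp_pos _).le] at h
      exact h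
    have heq : -ε * n = -(n * ε) := by ring
    rw [heq] at hdd
    have hexp1 : Real.exp (-(n * ε)) * Real.exp (n * ε) = 1 := by
      rw [← Real.exp_add]; simp
    calc dist ζ₁ ζ₂ ≤ Real.exp (-(n * ε)) * L := hdd
      _ ≤ Real.exp (-(n * ε)) * (D + δ') := by
          apply mul_le_mul_of_nonneg_left hLle (Real.exp_pos _).le
      _ ≤ Real.exp (-(n * ε)) * (D + δ * Real.exp (n * ε)) := by
          have := min_le_left (δ * Real.exp (n * ε)) (Real.exp (n * ε) * r / 8)
          apply mul_le_mul_of_nonneg_left (by linarith) (Real.exp_pos _).le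
      _ = Real.exp (-(n * ε)) * D + δ := by
          rw [mul_add]
          congr 1
          rw [← mul_assoc, mul_comm (Real.exp (-(n * ε))) δ, mul_assoc, hexp1, mul_one]
  -- combine
  have h2 : Real.exp (n * ε) * dist ζ₁ ζ₂ ≤ D := by
    have := mul_le_mul_of_nonneg_left hlower hen.le
    rwa [← mul_assoc, ← Real.exp_add, add_neg_cancel, Real.exp_zero, one_mul] at this
  linarith
end
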